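/- There exists an absolute constant C > 0 such that for every arc I ⊆ 𝕋 and every a ∈ L^∞(𝕋) supported in I with ∫_𝕋 a(θ) dθ = 0, one has Σ_{n ∈ ℤ∖{0}} Ψ₀(|n â(n)|) / n² ≤ C |I| Ψ₀(‖a‖_{L^∞(𝕋)}). -/

import Mathlib

/-!
Write `β n = ‖â n‖` and `M = ‖a‖_∞`. Since `∫ a = 0`, one may subtract `e^{-inc}` from the
kernel, so `|â n| ≤ M |I|² |n| / 2π`; Parseval gives `∑ β n ² ≤ |I| M² / 2π`.

With `L = log (e + M)` choose a threshold `s` with `log (e + s) ≥ L / 2` and `s L² ≲ M`, and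
split `Ψ₀ t ≤ min t s + t / log (e + s)`. The `min` part is at most `M |I|²` per frequency
`|n| ≤ 1 / (|I| L)` and `s / n²` beyond. The other part is controlled by `∑ β n / |n| ≲ |I| M`:
below `1 / |I|` by the decay bound, above it by Cauchy–Schwarz against Parseval. By the choice
of `s` both parts are `≲ |I| M / L = |I| Ψ₀(M)`.
-/

open MeasureTheory Real Set ENNReal

noncomputable section

/-- `Ψ₀(t) = t / log(e+t)`. -/
def psi0 (t : ℝ) : ℝ := t / Real.log (Real.exp 1 + t)

/-- `Ψ₀` on `[0,∞]`, with `Ψ₀(∞) = ∞`. -/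
def psi0E (t : ℝ≥0∞) : ℝ≥0∞ := t / ENNReal.ofReal (Real.log (Real.exp 1 + t.toReal))

/-- The `n`-th Fourier coefficient `â(n) = (2π)⁻¹ ∫_0^{2π} a(θ) e^{-inθ} dθ`. -/
def fourierCoeffT (a : ℝ → ℂ) (n : ℤ) : ℂ :=
  (2 * π : ℂ)⁻¹ * ∫ θ in (0 : ℝ)..(2 * π), a θ * Complex.exp (-Complex.I * n * θ)

/-- The `L^∞` norm (essential supremum of `|a|`), valued in `[0,∞]`. -/
def einfNormC (a : ℝ → ℂ) : ℝ≥0∞ := essSup (fun θ => (‖a θ‖₊ : ℝ≥0∞)) volume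

open Finset

lemma one_le_log_exp_one_add {t : ℝ} (ht : 0 ≤ t) : 1 ≤ Real.log (Real.exp 1 + t) :=
  (Real.log_exp 1).symm.le.trans (Real.log_le_log (Real.exp_pos 1) (by linarith))

lemma psi0_nonneg {t : ℝ} (ht : 0 ≤ t) : 0 ≤ psi0 t :=
  div_nonneg ht (by linarith [one_le_log_exp_one_add ht])

lemma psi0_le_self {t : ℝ} (ht : 0 ≤ t) : psi0 t ≤ t :=
  div_le_self ht (one_le_log_exp_one_add ht)

lemma psi0_le_min_add_div_log {s t : ℝ} (hs : 0 ≤ s) (ht : 0 ≤ t) :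
    psi0 t ≤ min t s + t / Real.log (Real.exp 1 + s) := by
  have hlog := one_le_log_exp_one_add hs
  rcases le_total t s with hts | hst
  · rw [min_eq_left hts]
    linarith [psi0_le_self ht, div_nonneg ht (by linarith : 0 ≤ Real.log (Real.exp 1 + s))]
  · rw [min_eq_right hst]
    have : psi0 t ≤ t / Real.log (Real.exp 1 + s) :=
      div_le_div_of_nonneg_left ht (by linarith) (Real.log_le_log (by positivity) (by linarith))
    linarith

lemma log_sq_le_sixteen_mul_sqrt {x : ℝ} (hx : 1 ≤ x) : Real.log x ^ 2 ≤ 16 * √x := by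
  set w := √√x
  have hw : 0 < w := by positivity
  have hw2 : w ^ 2 = √x := Real.sq_sqrt (by positivity)
  have hlog : Real.log x = 4 * Real.log w := by
    rw [show (4 : ℝ) = (4 : ℕ) by norm_num, ← Real.log_pow, show w ^ 4 = (w ^ 2) ^ 2 by ring, hw2,
      Real.sq_sqrt (by linarith)]
  have hlogw : Real.log w ≤ w := (Real.log_le_sub_one_of_pos hw).trans (by linarith)
  have hlog0 : 0 ≤ Real.log x := Real.log_nonneg hx
  rw [← hw2]
  nlinarith

lemma exists_log_threshold {M : ℝ} (hM : 0 ≤ M) : ∃ s, 0 ≤ s ∧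
    Real.log (Real.exp 1 + M) ≤ 2 * Real.log (Real.exp 1 + s) ∧
    s * Real.log (Real.exp 1 + M) ^ 2 ≤ 64 * M := by
  have he : Real.exp 1 < 3 := Real.exp_one_lt_d9.trans (by norm_num)
  have hL := one_le_log_exp_one_add hM
  rcases le_total M 1 with hM1 | hM1
  · refine ⟨M, hM, by linarith, ?_⟩
    have : Real.log (Real.exp 1 + M) ≤ 3 :=
      (Real.log_le_sub_one_of_pos (by positivity)).trans (by linarith)
    have : Real.log (Real.exp 1 + M) ^ 2 ≤ 64 := by nlinarith
    nlinarith
  · refine ⟨√(Real.exp 1 + M), by positivity, ?_, ?_⟩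
    · have := Real.log_le_log (by positivity) (le_add_of_nonneg_left (Real.exp_pos 1).le)
        (x := √(Real.exp 1 + M))
      rw [Real.log_sqrt (by positivity)] at this
      linarith
    · have h16 := log_sq_le_sixteen_mul_sqrt (x := Real.exp 1 + M) (by linarith [Real.exp_pos 1])
      have hsq := Real.mul_self_sqrt (by positivity : 0 ≤ Real.exp 1 + M)
      nlinarith [Real.sqrt_nonneg (Real.exp 1 + M)]

namespace Int

lemma card_filter_natAbs_eq_le_two (u : Finset ℤ) (k : ℕ) : #{n ∈ u | n.natAbs = k} ≤ 2 := by
  refine (Finset.card_le_card (t := {(k : ℤ), -(k : ℤ)}) fun n hn => ?_).trans Finset.card_le_two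
  rcases Int.natAbs_eq n with h | h <;> simp [(Finset.mem_filter.1 hn).2 ▸ h]

lemma abs_cast_eq_natAbs (n : ℤ) : |(n : ℝ)| = n.natAbs := by
  rw [Nat.cast_natAbs, Int.cast_abs]

lemma sum_natAbs_le_two_mul {u : Finset ℤ} {g : ℕ → ℝ} (hg : ∀ k, 0 ≤ g k) :
    ∑ n ∈ u, g n.natAbs ≤ 2 * ∑ k ∈ u.image natAbs, g k := by
  rw [Finset.sum_comp, Finset.mul_sum]
  refine Finset.sum_le_sum fun k _ => ?_
  rw [nsmul_eq_mul]
  exact mul_le_mul_of_nonneg_right (by exact_mod_cast card_filter_natAbs_eq_le_two u k) (hg k)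

lemma card_le_two_mul_of_abs_le {u : Finset ℤ} (hu : 0 ∉ u) {r : ℝ} (hr : 0 ≤ r)
    (h : ∀ n ∈ u, |(n : ℝ)| ≤ r) : (#u : ℝ) ≤ 2 * r := by
  have himage : u.image natAbs ⊆ Finset.Icc 1 ⌊r⌋₊ := by
    intro k hk
    obtain ⟨n, hn, rfl⟩ := Finset.mem_image.1 hk
    refine Finset.mem_Icc.2 ⟨natAbs_pos.2 (ne_of_mem_of_not_mem hn hu), Nat.le_floor ?_⟩
    rw [← abs_cast_eq_natAbs]
    exact h n hn
  calc (#u : ℝ) ≤ ((2 * #(u.image natAbs) : ℕ) : ℝ) := by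
        exact_mod_cast Finset.card_le_mul_card_image u 2 fun k _ => card_filter_natAbs_eq_le_two u k
    _ ≤ 2 * (⌊r⌋₊ : ℝ) := by
        push_cast
        gcongr
        exact_mod_cast (Finset.card_le_card himage).trans (by simp)
    _ ≤ 2 * r := by gcongr; exact Nat.floor_le hr

lemma sum_inv_sq_le_of_lt_abs {u : Finset ℤ} {r : ℝ} (hr : 0 < r)
    (h : ∀ n ∈ u, r < |(n : ℝ)|) : ∑ n ∈ u, ((n : ℝ) ^ 2)⁻¹ ≤ 4 / r := by
  have himage : u.image natAbs ⊆ Finset.Ioo ⌊r⌋₊ ((u.image natAbs).sup id + 1) := by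
    intro k hk
    refine Finset.mem_Ioo.2 ⟨?_, Nat.lt_succ_of_le (Finset.le_sup (f := id) hk)⟩
    obtain ⟨n, hn, rfl⟩ := Finset.mem_image.1 hk
    rw [Nat.floor_lt hr.le, ← abs_cast_eq_natAbs]
    exact h n hn
  calc ∑ n ∈ u, ((n : ℝ) ^ 2)⁻¹ = ∑ n ∈ u, (((n.natAbs : ℕ) : ℝ) ^ 2)⁻¹ := by
        simp_rw [← abs_cast_eq_natAbs, sq_abs]
    _ ≤ 2 * ∑ k ∈ u.image natAbs, ((k : ℝ) ^ 2)⁻¹ :=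
        sum_natAbs_le_two_mul (g := fun k : ℕ => ((k : ℝ) ^ 2)⁻¹) fun k => by positivity
    _ ≤ 2 * (2 / (⌊r⌋₊ + 1)) := by
        gcongr
        exact (Finset.sum_le_sum_of_subset_of_nonneg himage fun _ _ _ => by positivity).trans
          (sum_Ioo_inv_sq_le _ _)
    _ ≤ 4 / r := by
        rw [← mul_div_assoc]
        gcongr
        · norm_num
        · exact (Nat.lt_floor_add_one r).le

end Int

lemma abs_mul_div_sq (n : ℤ) (x : ℝ) : |(n : ℝ)| * x / (n : ℝ) ^ 2 = x / |(n : ℝ)| := by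
  rcases eq_or_ne n 0 with rfl | hn
  · simp
  · rw [← sq_abs, sq, mul_div_mul_left _ _ (by positivity)]

lemma sum_le_of_le_of_le_div_sq {u : Finset ℤ} (hu : 0 ∉ u) {f : ℤ → ℝ} {r A B : ℝ}
    (hr : 0 < r) (hA : 0 ≤ A) (hB : 0 ≤ B) (hlow : ∀ n ∈ u, |(n : ℝ)| ≤ r → f n ≤ A)
    (hhigh : ∀ n ∈ u, r < |(n : ℝ)| → f n ≤ B / (n : ℝ) ^ 2) :
    ∑ n ∈ u, f n ≤ 2 * r * A + 4 * B / r := by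
  rw [← Finset.sum_filter_add_sum_filter_not u (fun n : ℤ => |(n : ℝ)| ≤ r)]
  gcongr
  · refine (Finset.sum_le_card_nsmul _ f A fun n hn =>
      hlow n (Finset.mem_filter.1 hn).1 (Finset.mem_filter.1 hn).2).trans ?_
    rw [nsmul_eq_mul]
    gcongr
    exact Int.card_le_two_mul_of_abs_le (fun h => hu (Finset.mem_filter.1 h).1) hr.le
      fun n hn => (Finset.mem_filter.1 hn).2
  · calc ∑ n ∈ u.filter (fun n : ℤ => ¬|(n : ℝ)| ≤ r), f n
        ≤ ∑ n ∈ u.filter (fun n : ℤ => ¬|(n : ℝ)| ≤ r), B * ((n : ℝ) ^ 2)⁻¹ :=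
          Finset.sum_le_sum fun n hn => (hhigh n (Finset.mem_filter.1 hn).1
            (not_le.1 (Finset.mem_filter.1 hn).2)).trans_eq (div_eq_mul_inv _ _)
      _ ≤ B * (4 / r) := by
          rw [← Finset.mul_sum]
          gcongr
          exact Int.sum_inv_sq_le_of_lt_abs hr fun n hn => not_le.1 (Finset.mem_filter.1 hn).2
      _ = 4 * B / r := by ring

lemma sum_div_abs_le {u : Finset ℤ} (hu : 0 ∉ u) {β : ℤ → ℝ} {ℓ M : ℝ} (hℓ : 0 < ℓ)
    (hM : 0 ≤ M) (hdecay : ∀ n, β n ≤ M * ℓ ^ 2 * |(n : ℝ)|)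
    (hbessel : ∑ n ∈ u, β n ^ 2 ≤ ℓ * M ^ 2) :
    ∑ n ∈ u, β n / |(n : ℝ)| ≤ 4 * ℓ * M := by
  rw [← Finset.sum_filter_add_sum_filter_not u (fun n : ℤ => |(n : ℝ)| ≤ ℓ⁻¹),
    show 4 * ℓ * M = 2 * ℓ⁻¹ * (M * ℓ ^ 2) + 2 * ℓ * M by field_simp; ring]
  set high := u.filter (fun n : ℤ => ¬|(n : ℝ)| ≤ ℓ⁻¹)
  gcongr
  · refine (Finset.sum_le_card_nsmul _ _ _ fun n _ =>
      div_le_of_le_mul₀ (abs_nonneg _) (by positivity) (hdecay n)).trans ?_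
    rw [nsmul_eq_mul]
    gcongr
    exact Int.card_le_two_mul_of_abs_le (fun h => hu (Finset.mem_filter.1 h).1) (by positivity)
      fun n hn => (Finset.mem_filter.1 hn).2
  · calc ∑ n ∈ high, β n / |(n : ℝ)|
        ≤ √(∑ n ∈ high, β n ^ 2) * √(∑ n ∈ high, (|(n : ℝ)|⁻¹) ^ 2) := by
          simp_rw [div_eq_mul_inv]
          exact Real.sum_mul_le_sqrt_mul_sqrt _ _ _
      _ ≤ √(ℓ * M ^ 2) * √(4 / ℓ⁻¹) := by
          gcongr
          · exact (Finset.sum_le_sum_of_subset_of_nonneg (Finset.filter_subset _ _)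
              fun _ _ _ => sq_nonneg _).trans hbessel
          · simp_rw [inv_pow, sq_abs]
            exact Int.sum_inv_sq_le_of_lt_abs (by positivity)
              fun n hn => not_le.1 (Finset.mem_filter.1 hn).2
      _ = 2 * ℓ * M := by
          rw [← Real.sqrt_mul (by positivity), div_inv_eq_mul,
            show ℓ * M ^ 2 * (4 * ℓ) = (2 * ℓ * M) ^ 2 by ring, Real.sqrt_sq (by positivity)]

lemma sum_psi0_abs_mul_div_sq_le {u : Finset ℤ} (hu : 0 ∉ u) {β : ℤ → ℝ} {ℓ M : ℝ}
    (hℓ : 0 < ℓ) (hM : 0 ≤ M) (hβ : ∀ n, 0 ≤ β n) (hdecay : ∀ n, β n ≤ M * ℓ ^ 2 * |(n : ℝ)|)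
    (hbessel : ∑ n ∈ u, β n ^ 2 ≤ ℓ * M ^ 2) :
    ∑ n ∈ u, psi0 (|(n : ℝ)| * β n) / (n : ℝ) ^ 2 ≤ 266 * ℓ * psi0 M := by
  obtain ⟨s, hs, hlog, hsL⟩ := exists_log_threshold hM
  set L := Real.log (Real.exp 1 + M)
  have hL : 1 ≤ L := one_le_log_exp_one_add hM
  have hpoint : ∀ n ∈ u, psi0 (|(n : ℝ)| * β n) / (n : ℝ) ^ 2 ≤
      min (|(n : ℝ)| * β n) s / (n : ℝ) ^ 2 + β n / |(n : ℝ)| / Real.log (Real.exp 1 + s) := by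
    intro n _
    have := psi0_le_min_add_div_log hs (mul_nonneg (abs_nonneg (n : ℝ)) (hβ n))
    rw [← abs_mul_div_sq, div_right_comm, ← add_div]
    exact div_le_div_of_nonneg_right this (sq_nonneg _)
  have hmin : ∑ n ∈ u, min (|(n : ℝ)| * β n) s / (n : ℝ) ^ 2 ≤
      2 * (ℓ * L)⁻¹ * (M * ℓ ^ 2) + 4 * s / (ℓ * L)⁻¹ :=
    sum_le_of_le_of_le_div_sq hu (by positivity) (by positivity) hs
      (fun n _ _ => (div_le_div_of_nonneg_right (min_le_left _ _) (sq_nonneg _)).trans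
        ((abs_mul_div_sq n (β n)).trans_le
          (div_le_of_le_mul₀ (abs_nonneg _) (by positivity) (hdecay n))))
      (fun n _ _ => div_le_div_of_nonneg_right (min_le_right _ _) (sq_nonneg _))
  have hdiv : (∑ n ∈ u, β n / |(n : ℝ)|) / Real.log (Real.exp 1 + s) ≤ 4 * ℓ * M / (L / 2) :=
    div_le_div₀ (by positivity) (sum_div_abs_le hu hℓ hM hdecay hbessel) (by positivity)
      (by linarith)
  calc ∑ n ∈ u, psi0 (|(n : ℝ)| * β n) / (n : ℝ) ^ 2
      ≤ ∑ n ∈ u, min (|(n : ℝ)| * β n) s / (n : ℝ) ^ 2 +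
          (∑ n ∈ u, β n / |(n : ℝ)|) / Real.log (Real.exp 1 + s) := by
        rw [Finset.sum_div, ← Finset.sum_add_distrib]
        exact Finset.sum_le_sum hpoint
    _ ≤ 2 * (ℓ * L)⁻¹ * (M * ℓ ^ 2) + 4 * s / (ℓ * L)⁻¹ + 4 * ℓ * M / (L / 2) :=
        add_le_add hmin hdiv
    _ ≤ 266 * ℓ * (M / L) := by
        have : 4 * s * (ℓ * L) ≤ 256 * ℓ * (M / L) := by
          rw [mul_div_assoc', le_div_iff₀ (by positivity)]
          nlinarith
        have : 2 * (ℓ * L)⁻¹ * (M * ℓ ^ 2) + 4 * ℓ * M / (L / 2) = 10 * ℓ * (M / L) := by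
          field_simp
          ring
        rw [div_inv_eq_mul]
        linarith

lemma fourierCoeffT_eq_fourierCoeffOn (a : ℝ → ℂ) (n : ℤ) :
    fourierCoeffT a n = fourierCoeffOn Real.two_pi_pos a n := by
  rw [fourierCoeffT, fourierCoeffOn_eq_integral, sub_zero, Complex.real_smul]
  congr 1
  · push_cast; ring
  · refine intervalIntegral.integral_congr fun θ _ => ?_
    rw [fourier_coe_apply, smul_eq_mul, mul_comm]
    congr 2
    field_simp
    push_cast
    ring

lemma intervalIntegrable_of_ae_norm_le {E : Type*} [NormedAddCommGroup E] {f : ℝ → E}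
    (hf : AEStronglyMeasurable f volume) {M : ℝ} (hM : ∀ᵐ x, ‖f x‖ ≤ M) (x y : ℝ) :
    IntervalIntegrable f volume x y :=
  (((memLp_top_of_bound hf M hM).locallyIntegrable le_top).integrableOn_isCompact
    isCompact_uIcc).intervalIntegrable

lemma Function.Periodic.intervalIntegral_eq_of_eqOn_zero {E : Type*} [NormedAddCommGroup E]
    [NormedSpace ℝ E] {f : ℝ → E} {T : ℝ} (hf : Function.Periodic f T) {c ℓ : ℝ} (hℓ : 0 ≤ ℓ)
    (hℓT : ℓ ≤ T) (hint : IntervalIntegrable f volume c (c + T))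
    (hzero : EqOn f 0 (Ico (c + ℓ) (c + T))) :
    ∫ θ in (0 : ℝ)..T, f θ = ∫ θ in c..(c + ℓ), f θ := by
  have htail : ∫ θ in (c + ℓ)..(c + T), f θ = 0 := by
    rw [intervalIntegral.integral_congr_Ioo_of_le (by linarith)
      (fun θ hθ => hzero (Ioo_subset_Ico_self hθ))]
    simp
  have hmid : c + ℓ ∈ uIcc c (c + T) := mem_uIcc.2 (Or.inl ⟨by linarith, by linarith⟩)
  have hsplit := intervalIntegral.integral_add_adjacent_intervals
    (hint.mono_set (uIcc_subset_uIcc_left hmid)) (hint.mono_set (uIcc_subset_uIcc_right hmid))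
  rw [htail, add_zero] at hsplit
  rw [hsplit]
  simpa using hf.intervalIntegral_add_eq 0 c

lemma periodic_exp_neg_I_mul_int (n : ℤ) :
    Function.Periodic (fun θ : ℝ => Complex.exp (-Complex.I * n * θ)) (2 * π) := fun θ => by
  dsimp only
  rw [show -Complex.I * n * ((θ + 2 * π : ℝ) : ℂ) =
      -Complex.I * n * θ + (-n : ℤ) * (2 * π * Complex.I) by push_cast; ring,
    Complex.exp_add, Complex.exp_int_mul_two_pi_mul_I, mul_one]

lemma norm_fourierCoeffT_le {a : ℝ → ℂ} {c ℓ M : ℝ} (ha : AEStronglyMeasurable a volume)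
    (hper : Function.Periodic a (2 * π)) (hℓ : 0 ≤ ℓ) (hℓπ : ℓ ≤ 2 * π)
    (hzero : EqOn a 0 (Ico (c + ℓ) (c + 2 * π))) (hM : ∀ᵐ θ, ‖a θ‖ ≤ M)
    (hmean : ∫ θ in (0 : ℝ)..(2 * π), a θ = 0) (n : ℤ) :
    ‖fourierCoeffT a n‖ ≤ M * ℓ ^ 2 * |(n : ℝ)| / (2 * π) := by
  set e : ℝ → ℂ := fun θ => Complex.exp (-Complex.I * n * θ)
  have he : ∀ θ, ‖e θ‖ = 1 := fun θ => by
    simp only [e]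
    rw [show -Complex.I * n * θ = ((-(n * θ) : ℝ) : ℂ) * Complex.I by push_cast; ring]
    exact Complex.norm_exp_ofReal_mul_I _
  have hae : ∀ᵐ θ, ‖a θ * e θ‖ ≤ M := by
    filter_upwards [hM] with θ hθ
    rwa [norm_mul, he, mul_one]
  have hint_ae : ∀ x y, IntervalIntegrable (fun θ => a θ * e θ) volume x y :=
    intervalIntegrable_of_ae_norm_le (ha.mul (by fun_prop : Continuous e).aestronglyMeasurable) hae
  have hint_a := intervalIntegrable_of_ae_norm_le ha hM
  have hmean' : ∫ θ in c..(c + ℓ), a θ = 0 := by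
    rw [← hper.intervalIntegral_eq_of_eqOn_zero hℓ hℓπ (hint_a _ _) hzero, hmean]
  have hrepr : (2 * π : ℂ) * fourierCoeffT a n = ∫ θ in c..(c + ℓ), a θ * (e θ - e c) := by
    simp_rw [mul_sub]
    rw [intervalIntegral.integral_sub (hint_ae _ _) ((hint_a _ _).mul_const _),
      intervalIntegral.integral_mul_const, hmean', zero_mul, sub_zero]
    have hper_ae : Function.Periodic (fun θ => a θ * e θ) (2 * π) :=
      hper.mul (periodic_exp_neg_I_mul_int n)
    rw [← hper_ae.intervalIntegral_eq_of_eqOn_zero hℓ hℓπ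
      (hint_ae _ _) (fun θ hθ => by simp [hzero hθ]), fourierCoeffT, ← mul_assoc,
      mul_inv_cancel₀ (by exact_mod_cast Real.two_pi_pos.ne'), one_mul]
  have hbound : ∀ᵐ θ, θ ∈ uIoc c (c + ℓ) → ‖a θ * (e θ - e c)‖ ≤ M * (|(n : ℝ)| * ℓ) := by
    filter_upwards [hM] with θ hθ hmem
    rw [uIoc_of_le (by linarith)] at hmem
    have hdiff : ‖e θ - e c‖ ≤ |(n : ℝ)| * ℓ := by
      have hfactor : e θ - e c =
          (Complex.exp (Complex.I * ((-(n * (θ - c)) : ℝ) : ℂ)) - 1) * e c := by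
        simp only [e]
        rw [sub_mul, one_mul, ← Complex.exp_add]
        push_cast
        ring_nf
      rw [hfactor, norm_mul, he, mul_one]
      refine Real.norm_exp_I_mul_ofReal_sub_one_le.trans ?_
      rw [Real.norm_eq_abs, abs_neg, abs_mul, abs_of_pos (sub_pos.2 hmem.1)]
      exact mul_le_mul_of_nonneg_left (by linarith [hmem.2]) (abs_nonneg _)
    rw [norm_mul]
    exact mul_le_mul hθ hdiff (norm_nonneg _) ((norm_nonneg _).trans hθ)
  have h := intervalIntegral.norm_integral_le_of_norm_le_const_ae hbound
  rw [← hrepr, norm_mul, add_sub_cancel_left, abs_of_nonneg hℓ] at h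
  have h2π : ‖(2 * π : ℂ)‖ = 2 * π := by simp [Real.pi_pos.le]
  rw [h2π] at h
  rw [le_div_iff₀ Real.two_pi_pos]
  linarith

lemma sum_sq_norm_fourierCoeffT_le {a : ℝ → ℂ} {c ℓ M : ℝ} (ha : AEStronglyMeasurable a volume)
    (hper : Function.Periodic a (2 * π)) (hℓ : 0 ≤ ℓ) (hℓπ : ℓ ≤ 2 * π)
    (hzero : EqOn a 0 (Ico (c + ℓ) (c + 2 * π))) (hM : ∀ᵐ θ, ‖a θ‖ ≤ M) (v : Finset ℤ) :
    ∑ n ∈ v, ‖fourierCoeffT a n‖ ^ 2 ≤ ℓ * M ^ 2 / (2 * π) := by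
  have hM2 : ∀ᵐ θ, ‖‖a θ‖ ^ 2‖ ≤ M ^ 2 := by
    filter_upwards [hM] with θ hθ
    rw [norm_pow, norm_norm]
    exact pow_le_pow_left₀ (norm_nonneg _) hθ 2
  have hparseval := hasSum_sq_fourierCoeffOn Real.two_pi_pos
    (MemLp.of_bound ha.restrict M (ae_restrict_of_ae hM))
  have hnorm_sq : ∫ θ in (0 : ℝ)..(2 * π), ‖a θ‖ ^ 2 ≤ ℓ * M ^ 2 := by
    have hper2 : Function.Periodic (fun θ => ‖a θ‖ ^ 2) (2 * π) := hper.comp (‖·‖ ^ 2)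
    rw [hper2.intervalIntegral_eq_of_eqOn_zero hℓ hℓπ
      (intervalIntegrable_of_ae_norm_le (ha.norm.pow 2) hM2 _ _)
      (fun θ hθ => by simp [hzero hθ])]
    refine (Real.le_norm_self _).trans ?_
    simpa [abs_of_nonneg hℓ, mul_comm] using
      intervalIntegral.norm_integral_le_of_norm_le_const_ae (a := c) (b := c + ℓ)
        (hM2.mono fun θ hθ _ => hθ)
  simp_rw [fourierCoeffT_eq_fourierCoeffOn]
  calc ∑ n ∈ v, ‖fourierCoeffOn Real.two_pi_pos a n‖ ^ 2
      ≤ (2 * π - 0)⁻¹ • ∫ θ in (0 : ℝ)..(2 * π), ‖a θ‖ ^ 2 :=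
        sum_le_hasSum v (fun _ _ => sq_nonneg _) hparseval
    _ ≤ ℓ * M ^ 2 / (2 * π) := by
        rw [smul_eq_mul, sub_zero, inv_mul_eq_div]
        gcongr

lemma psi0E_ofReal {t : ℝ} (ht : 0 ≤ t) : psi0E (ENNReal.ofReal t) = ENNReal.ofReal (psi0 t) := by
  rw [psi0E, psi0, ENNReal.toReal_ofReal ht,
    ENNReal.ofReal_div_of_pos (by linarith [one_le_log_exp_one_add ht])]

lemma ite_psi0E_div_eq_ofReal (b : ℂ) (n : ℤ) :
    (if n = 0 then 0 else psi0E (ENNReal.ofReal ‖(n : ℂ) * b‖) / ENNReal.ofReal ((n : ℝ) ^ 2)) =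
      ENNReal.ofReal (psi0 (|(n : ℝ)| * ‖b‖) / (n : ℝ) ^ 2) := by
  rcases eq_or_ne n 0 with rfl | hn
  · simp
  · rw [if_neg hn, norm_mul, Complex.norm_intCast, psi0E_ofReal (by positivity),
      ← ENNReal.ofReal_div_of_pos (by positivity)]

lemma ae_norm_le_toReal_einfNormC {a : ℝ → ℂ} (h : einfNormC a < ⊤) :
    ∀ᵐ θ, ‖a θ‖ ≤ (einfNormC a).toReal := by
  filter_upwards [_root_.ae_le_essSup (f := fun θ => (‖a θ‖₊ : ℝ≥0∞))] with θ hθ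
  simpa using ENNReal.toReal_mono h.ne hθ

/-- For an `L^∞` atom `a` supported in an arc `I = [c, c+ℓ)` of the torus with
`∫_𝕋 a = 0`, one has `Σ_{n≠0} Ψ₀(|n â(n)|)/n² ≤ C |I| Ψ₀(‖a‖_∞)`. -/
theorem stmt17 :
    ∃ C > (0 : ℝ), ∀ (a : ℝ → ℂ) (c ℓ : ℝ), 0 < ℓ → ℓ ≤ 2 * π →
      Measurable a → Function.Periodic a (2 * π) →
      (∀ θ ∈ Ico c (c + 2 * π), θ ∉ Ico c (c + ℓ) → a θ = 0) →
      einfNormC a < ⊤ →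
      (∫ θ in (0 : ℝ)..(2 * π), a θ) = 0 →
      (∑' n : ℤ, (if n = 0 then 0 else
          psi0E (ENNReal.ofReal ‖(n : ℂ) * fourierCoeffT a n‖) /
            ENNReal.ofReal ((n : ℝ) ^ 2))) ≤
        ENNReal.ofReal (C * ℓ * psi0 ((einfNormC a).toReal)) := by
  refine ⟨266, by norm_num, fun a c ℓ hℓ hℓπ ha hper hsupp hfin hmean => ?_⟩
  set M := (einfNormC a).toReal
  have hM := ae_norm_le_toReal_einfNormC hfin
  have hzero : EqOn a 0 (Ico (c + ℓ) (c + 2 * π)) := fun θ hθ =>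
    hsupp θ ⟨by linarith [hθ.1], hθ.2⟩ fun h => by linarith [h.2, hθ.1]
  have h2π : 1 ≤ 2 * π := by linarith [Real.pi_gt_three]
  have hdecay : ∀ n : ℤ, ‖fourierCoeffT a n‖ ≤ M * ℓ ^ 2 * |(n : ℝ)| := fun n =>
    (norm_fourierCoeffT_le ha.aestronglyMeasurable hper hℓ.le hℓπ hzero hM hmean n).trans
      (div_le_self (by positivity) h2π)
  have hbessel : ∀ u : Finset ℤ, ∑ n ∈ u, ‖fourierCoeffT a n‖ ^ 2 ≤ ℓ * M ^ 2 := fun u =>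
    (sum_sq_norm_fourierCoeffT_le ha.aestronglyMeasurable hper hℓ.le hℓπ hzero hM u).trans
      (div_le_self (by positivity) h2π)
  refine ENNReal.summable.tsum_le_of_sum_le fun s => ?_
  simp_rw [ite_psi0E_div_eq_ofReal]
  rw [← ENNReal.ofReal_sum_of_nonneg fun n _ =>
      div_nonneg (psi0_nonneg (by positivity)) (sq_nonneg _),
    ← Finset.sum_erase (a := 0) s (by simp)]
  exact ENNReal.ofReal_le_ofReal (sum_psi0_abs_mul_div_sq_le (s.notMem_erase 0) hℓ
    ENNReal.toReal_nonneg (fun n => norm_nonneg _) hdecay (hbessel _))
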